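/- arXiv:2112.06755 — 6 statements merged into one kernel-verified Lean document; each statement's English description precedes it below -/
import Mathlib

section
/- Suppose real numbers x3, y3, y4 satisfy 4*x3^2 - 4*x3 + 4*y3^2 - 3 = 0 and x3^2 + y3^2 - 2*y3*y4 + y4^2 - 1 = 0. Then -16*y4^4 + 56*y4^2 + 15 >= 0, and there exists a sign s ∈ {1, -1} such that y3 = (8*y4^3 + 2*y4 + s*sqrt(-16*y4^4 + 56*y4^2 + 15)) / (4*(4*y4^2 + 1)) and x3 = (4*y4^2 + 1 + 2*s*y4*sqrt(-16*y4^4 + 56*y4^2 + 15)) / (4*(4*y4^2 + 1)). -/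
/-- Parameterization of the solutions of the symmetric equilateral pentagon
constraints by `y4`, with a consistent sign choice `s`. -/
theorem stmt_1 (x3 y3 y4 : ℝ)
    (h1 : 4*x3^2 - 4*x3 + 4*y3^2 - 3 = 0)
    (h2 : x3^2 + y3^2 - 2*y3*y4 + y4^2 - 1 = 0) :
    -16*y4^4 + 56*y4^2 + 15 ≥ 0 ∧
    ∃ s : ℝ, (s = 1 ∨ s = -1) ∧
      y3 = (8*y4^3 + 2*y4 + s * Real.sqrt (-16*y4^4 + 56*y4^2 + 15)) / (4*(4*y4^2 + 1)) ∧
      x3 = (4*y4^2 + 1 + 2*s*y4 * Real.sqrt (-16*y4^4 + 56*y4^2 + 15)) / (4*(4*y4^2 + 1)) := by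
  set E : ℝ := 2*(4*y4^2+1)*(2*y3-y4) with hE
  have hD : -16*y4^4 + 56*y4^2 + 15 = E^2 := by
    rw [hE]
    linear_combination (-(4*(4*y4^2+1))*(x3 + 2*y3*y4 - y4^2 + 1/4))*h1
      + (-16*(4*y4^2+1) + 16*(4*y4^2+1)*(x3 + 2*y3*y4 - y4^2 + 1/4))*h2
  have hx3 : x3 = 2*y3*y4 - y4^2 + 1/4 := by linear_combination (-1/4)*h1 + h2
  have hne : (4*(4*y4^2 + 1) : ℝ) ≠ 0 := by positivity
  have hsqrt : Real.sqrt (-16*y4^4 + 56*y4^2 + 15) = |E| := by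
    rw [hD, Real.sqrt_sq_eq_abs]
  obtain ⟨s, hs1, hsE⟩ : ∃ s : ℝ, (s = 1 ∨ s = -1) ∧ s * |E| = E := by
    rcases le_or_gt 0 E with h | h
    · exact ⟨1, Or.inl rfl, by rw [abs_of_nonneg h]; ring⟩
    · exact ⟨-1, Or.inr rfl, by rw [abs_of_neg h]; ring⟩
  refine ⟨by rw [hD]; positivity, s, hs1, ?_, ?_⟩
  · rw [hsqrt, eq_div_iff hne]
    linear_combination -hsE
  · rw [hsqrt, eq_div_iff hne]
    linear_combination (4*(4*y4^2+1))*hx3 - 2*y4*hsE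
end

section
/- The polynomial 64*m^9 - 752*m^8 + 2316*m^7 - 109*m^6 - 2830*m^5 + 45*m^4 + 1362*m^3 + 215*m^2 - 149*m - 17 has exactly one positive real root, and that root lies in the interval (0.341, 0.343). -/
/-- The mass polynomial for the symmetric equilateral pentagonal vortex
central configuration. -/
noncomputable def massPoly2 (m : ℝ) : ℝ :=
  64*m^9 - 752*m^8 + 2316*m^7 - 109*m^6 - 2830*m^5 + 45*m^4 + 1362*m^3
    + 215*m^2 - 149*m - 17

lemma dpos (m : ℝ) (ha : ((3 : ℝ)/10) ≤ m) (hb : m ≤ ((2 : ℝ)/5)) :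
    0 < 576*m^8 - 6016*m^7 + 16212*m^6 - 654*m^5 - 14150*m^4 + 180*m^3 + 4086*m^2 + 430*m - 149 := by
  have t0 : (0:ℝ) ≤ m - ((3 : ℝ)/10) := by linarith
  have hh : m - ((3 : ℝ)/10) ≤ ((1 : ℝ)/10) := by linarith
  have q2 : (m - ((3 : ℝ)/10))^2 ≤ ((1 : ℝ)/10)^1 * (m - ((3 : ℝ)/10)) := by
    calc (m - ((3 : ℝ)/10))^2 = (m - ((3 : ℝ)/10))^1 * (m - ((3 : ℝ)/10)) := by ring
      _ ≤ ((1 : ℝ)/10)^1 * (m - ((3 : ℝ)/10)) := mul_le_mul_of_nonneg_right (pow_le_pow_left₀ t0 hh _) t0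
  have q3 : (m - ((3 : ℝ)/10))^3 ≤ ((1 : ℝ)/10)^2 * (m - ((3 : ℝ)/10)) := by
    calc (m - ((3 : ℝ)/10))^3 = (m - ((3 : ℝ)/10))^2 * (m - ((3 : ℝ)/10)) := by ring
      _ ≤ ((1 : ℝ)/10)^2 * (m - ((3 : ℝ)/10)) := mul_le_mul_of_nonneg_right (pow_le_pow_left₀ t0 hh _) t0
  have p4 : (0:ℝ) ≤ (m - ((3 : ℝ)/10))^4 := pow_nonneg t0 4
  have p5 : (0:ℝ) ≤ (m - ((3 : ℝ)/10))^5 := pow_nonneg t0 5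
  have p6 : (0:ℝ) ≤ (m - ((3 : ℝ)/10))^6 := pow_nonneg t0 6
  have q7 : (m - ((3 : ℝ)/10))^7 ≤ ((1 : ℝ)/10)^6 * (m - ((3 : ℝ)/10)) := by
    calc (m - ((3 : ℝ)/10))^7 = (m - ((3 : ℝ)/10))^6 * (m - ((3 : ℝ)/10)) := by ring
      _ ≤ ((1 : ℝ)/10)^6 * (m - ((3 : ℝ)/10)) := mul_le_mul_of_nonneg_right (pow_le_pow_left₀ t0 hh _) t0
  have p8 : (0:ℝ) ≤ (m - ((3 : ℝ)/10))^8 := pow_nonneg t0 8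
  nlinarith [t0, hh, q2, q3, p4, p5, p6, q7, p8]

lemma pos0 (m : ℝ) (ha : ((2 : ℝ)/5) ≤ m) (hb : m ≤ ((3 : ℝ)/4)) :
    0 < 64*m^9 - 752*m^8 + 2316*m^7 - 109*m^6 - 2830*m^5 + 45*m^4 + 1362*m^3 + 215*m^2 - 149*m - 17 := by
  have t0 : (0:ℝ) ≤ m - ((2 : ℝ)/5) := by linarith
  have hh : m - ((2 : ℝ)/5) ≤ ((7 : ℝ)/20) := by linarith
  have p2 : (0:ℝ) ≤ (m - ((2 : ℝ)/5))^2 := pow_nonneg t0 2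
  have q3 : (m - ((2 : ℝ)/5))^3 ≤ ((7 : ℝ)/20)^2 * (m - ((2 : ℝ)/5)) := by
    calc (m - ((2 : ℝ)/5))^3 = (m - ((2 : ℝ)/5))^2 * (m - ((2 : ℝ)/5)) := by ring
      _ ≤ ((7 : ℝ)/20)^2 * (m - ((2 : ℝ)/5)) := mul_le_mul_of_nonneg_right (pow_le_pow_left₀ t0 hh _) t0
  have q4 : (m - ((2 : ℝ)/5))^4 ≤ ((7 : ℝ)/20)^3 * (m - ((2 : ℝ)/5)) := by
    calc (m - ((2 : ℝ)/5))^4 = (m - ((2 : ℝ)/5))^3 * (m - ((2 : ℝ)/5)) := by ring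
      _ ≤ ((7 : ℝ)/20)^3 * (m - ((2 : ℝ)/5)) := mul_le_mul_of_nonneg_right (pow_le_pow_left₀ t0 hh _) t0
  have p5 : (0:ℝ) ≤ (m - ((2 : ℝ)/5))^5 := pow_nonneg t0 5
  have p6 : (0:ℝ) ≤ (m - ((2 : ℝ)/5))^6 := pow_nonneg t0 6
  have p7 : (0:ℝ) ≤ (m - ((2 : ℝ)/5))^7 := pow_nonneg t0 7
  have q8 : (m - ((2 : ℝ)/5))^8 ≤ ((7 : ℝ)/20)^7 * (m - ((2 : ℝ)/5)) := by
    calc (m - ((2 : ℝ)/5))^8 = (m - ((2 : ℝ)/5))^7 * (m - ((2 : ℝ)/5)) := by ring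
      _ ≤ ((7 : ℝ)/20)^7 * (m - ((2 : ℝ)/5)) := mul_le_mul_of_nonneg_right (pow_le_pow_left₀ t0 hh _) t0
  have p9 : (0:ℝ) ≤ (m - ((2 : ℝ)/5))^9 := pow_nonneg t0 9
  nlinarith [t0, hh, p2, q3, q4, p5, p6, p7, q8, p9]

lemma pos1 (m : ℝ) (ha : ((3 : ℝ)/4) ≤ m) (hb : m ≤ ((69 : ℝ)/64)) :
    0 < 64*m^9 - 752*m^8 + 2316*m^7 - 109*m^6 - 2830*m^5 + 45*m^4 + 1362*m^3 + 215*m^2 - 149*m - 17 := by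
  have t0 : (0:ℝ) ≤ m - ((3 : ℝ)/4) := by linarith
  have hh : m - ((3 : ℝ)/4) ≤ ((21 : ℝ)/64) := by linarith
  have q2 : (m - ((3 : ℝ)/4))^2 ≤ ((21 : ℝ)/64)^1 * (m - ((3 : ℝ)/4)) := by
    calc (m - ((3 : ℝ)/4))^2 = (m - ((3 : ℝ)/4))^1 * (m - ((3 : ℝ)/4)) := by ring
      _ ≤ ((21 : ℝ)/64)^1 * (m - ((3 : ℝ)/4)) := mul_le_mul_of_nonneg_right (pow_le_pow_left₀ t0 hh _) t0
  have p3 : (0:ℝ) ≤ (m - ((3 : ℝ)/4))^3 := pow_nonneg t0 3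
  have p4 : (0:ℝ) ≤ (m - ((3 : ℝ)/4))^4 := pow_nonneg t0 4
  have p5 : (0:ℝ) ≤ (m - ((3 : ℝ)/4))^5 := pow_nonneg t0 5
  have p6 : (0:ℝ) ≤ (m - ((3 : ℝ)/4))^6 := pow_nonneg t0 6
  have q7 : (m - ((3 : ℝ)/4))^7 ≤ ((21 : ℝ)/64)^6 * (m - ((3 : ℝ)/4)) := by
    calc (m - ((3 : ℝ)/4))^7 = (m - ((3 : ℝ)/4))^6 * (m - ((3 : ℝ)/4)) := by ring
      _ ≤ ((21 : ℝ)/64)^6 * (m - ((3 : ℝ)/4)) := mul_le_mul_of_nonneg_right (pow_le_pow_left₀ t0 hh _) t0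
  have q8 : (m - ((3 : ℝ)/4))^8 ≤ ((21 : ℝ)/64)^7 * (m - ((3 : ℝ)/4)) := by
    calc (m - ((3 : ℝ)/4))^8 = (m - ((3 : ℝ)/4))^7 * (m - ((3 : ℝ)/4)) := by ring
      _ ≤ ((21 : ℝ)/64)^7 * (m - ((3 : ℝ)/4)) := mul_le_mul_of_nonneg_right (pow_le_pow_left₀ t0 hh _) t0
  have p9 : (0:ℝ) ≤ (m - ((3 : ℝ)/4))^9 := pow_nonneg t0 9
  nlinarith [t0, hh, q2, p3, p4, p5, p6, q7, q8, p9]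

lemma pos2 (m : ℝ) (ha : ((69 : ℝ)/64) ≤ m) (hb : m ≤ ((867 : ℝ)/512)) :
    0 < 64*m^9 - 752*m^8 + 2316*m^7 - 109*m^6 - 2830*m^5 + 45*m^4 + 1362*m^3 + 215*m^2 - 149*m - 17 := by
  have t0 : (0:ℝ) ≤ m - ((69 : ℝ)/64) := by linarith
  have hh : m - ((69 : ℝ)/64) ≤ ((315 : ℝ)/512) := by linarith
  have p2 : (0:ℝ) ≤ (m - ((69 : ℝ)/64))^2 := pow_nonneg t0 2
  have p3 : (0:ℝ) ≤ (m - ((69 : ℝ)/64))^3 := pow_nonneg t0 3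
  have p4 : (0:ℝ) ≤ (m - ((69 : ℝ)/64))^4 := pow_nonneg t0 4
  have p5 : (0:ℝ) ≤ (m - ((69 : ℝ)/64))^5 := pow_nonneg t0 5
  have q6 : (m - ((69 : ℝ)/64))^6 ≤ ((315 : ℝ)/512)^5 * (m - ((69 : ℝ)/64)) := by
    calc (m - ((69 : ℝ)/64))^6 = (m - ((69 : ℝ)/64))^5 * (m - ((69 : ℝ)/64)) := by ring
      _ ≤ ((315 : ℝ)/512)^5 * (m - ((69 : ℝ)/64)) := mul_le_mul_of_nonneg_right (pow_le_pow_left₀ t0 hh _) t0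
  have q7 : (m - ((69 : ℝ)/64))^7 ≤ ((315 : ℝ)/512)^6 * (m - ((69 : ℝ)/64)) := by
    calc (m - ((69 : ℝ)/64))^7 = (m - ((69 : ℝ)/64))^6 * (m - ((69 : ℝ)/64)) := by ring
      _ ≤ ((315 : ℝ)/512)^6 * (m - ((69 : ℝ)/64)) := mul_le_mul_of_nonneg_right (pow_le_pow_left₀ t0 hh _) t0
  have q8 : (m - ((69 : ℝ)/64))^8 ≤ ((315 : ℝ)/512)^7 * (m - ((69 : ℝ)/64)) := by
    calc (m - ((69 : ℝ)/64))^8 = (m - ((69 : ℝ)/64))^7 * (m - ((69 : ℝ)/64)) := by ring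
      _ ≤ ((315 : ℝ)/512)^7 * (m - ((69 : ℝ)/64)) := mul_le_mul_of_nonneg_right (pow_le_pow_left₀ t0 hh _) t0
  have p9 : (0:ℝ) ≤ (m - ((69 : ℝ)/64))^9 := pow_nonneg t0 9
  nlinarith [t0, hh, p2, p3, p4, p5, q6, q7, q8, p9]

lemma pos3 (m : ℝ) (ha : ((867 : ℝ)/512) ≤ m) (hb : m ≤ ((5673 : ℝ)/2048)) :
    0 < 64*m^9 - 752*m^8 + 2316*m^7 - 109*m^6 - 2830*m^5 + 45*m^4 + 1362*m^3 + 215*m^2 - 149*m - 17 := by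
  have t0 : (0:ℝ) ≤ m - ((867 : ℝ)/512) := by linarith
  have hh : m - ((867 : ℝ)/512) ≤ ((2205 : ℝ)/2048) := by linarith
  have p2 : (0:ℝ) ≤ (m - ((867 : ℝ)/512))^2 := pow_nonneg t0 2
  have p3 : (0:ℝ) ≤ (m - ((867 : ℝ)/512))^3 := pow_nonneg t0 3
  have p4 : (0:ℝ) ≤ (m - ((867 : ℝ)/512))^4 := pow_nonneg t0 4
  have q5 : (m - ((867 : ℝ)/512))^5 ≤ ((2205 : ℝ)/2048)^4 * (m - ((867 : ℝ)/512)) := by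
    calc (m - ((867 : ℝ)/512))^5 = (m - ((867 : ℝ)/512))^4 * (m - ((867 : ℝ)/512)) := by ring
      _ ≤ ((2205 : ℝ)/2048)^4 * (m - ((867 : ℝ)/512)) := mul_le_mul_of_nonneg_right (pow_le_pow_left₀ t0 hh _) t0
  have q6 : (m - ((867 : ℝ)/512))^6 ≤ ((2205 : ℝ)/2048)^5 * (m - ((867 : ℝ)/512)) := by
    calc (m - ((867 : ℝ)/512))^6 = (m - ((867 : ℝ)/512))^5 * (m - ((867 : ℝ)/512)) := by ring
      _ ≤ ((2205 : ℝ)/2048)^5 * (m - ((867 : ℝ)/512)) := mul_le_mul_of_nonneg_right (pow_le_pow_left₀ t0 hh _) t0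
  have q7 : (m - ((867 : ℝ)/512))^7 ≤ ((2205 : ℝ)/2048)^6 * (m - ((867 : ℝ)/512)) := by
    calc (m - ((867 : ℝ)/512))^7 = (m - ((867 : ℝ)/512))^6 * (m - ((867 : ℝ)/512)) := by ring
      _ ≤ ((2205 : ℝ)/2048)^6 * (m - ((867 : ℝ)/512)) := mul_le_mul_of_nonneg_right (pow_le_pow_left₀ t0 hh _) t0
  have p8 : (0:ℝ) ≤ (m - ((867 : ℝ)/512))^8 := pow_nonneg t0 8
  have p9 : (0:ℝ) ≤ (m - ((867 : ℝ)/512))^9 := pow_nonneg t0 9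
  nlinarith [t0, hh, p2, p3, p4, q5, q6, q7, p8, p9]

lemma pos4 (m : ℝ) (ha : ((5673 : ℝ)/2048) ≤ m) (hb : m ≤ ((17961 : ℝ)/4096)) :
    0 < 64*m^9 - 752*m^8 + 2316*m^7 - 109*m^6 - 2830*m^5 + 45*m^4 + 1362*m^3 + 215*m^2 - 149*m - 17 := by
  have t0 : (0:ℝ) ≤ m - ((5673 : ℝ)/2048) := by linarith
  have hh : m - ((5673 : ℝ)/2048) ≤ ((6615 : ℝ)/4096) := by linarith
  have p2 : (0:ℝ) ≤ (m - ((5673 : ℝ)/2048))^2 := pow_nonneg t0 2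
  have p3 : (0:ℝ) ≤ (m - ((5673 : ℝ)/2048))^3 := pow_nonneg t0 3
  have q4 : (m - ((5673 : ℝ)/2048))^4 ≤ ((6615 : ℝ)/4096)^3 * (m - ((5673 : ℝ)/2048)) := by
    calc (m - ((5673 : ℝ)/2048))^4 = (m - ((5673 : ℝ)/2048))^3 * (m - ((5673 : ℝ)/2048)) := by ring
      _ ≤ ((6615 : ℝ)/4096)^3 * (m - ((5673 : ℝ)/2048)) := mul_le_mul_of_nonneg_right (pow_le_pow_left₀ t0 hh _) t0
  have q5 : (m - ((5673 : ℝ)/2048))^5 ≤ ((6615 : ℝ)/4096)^4 * (m - ((5673 : ℝ)/2048)) := by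
    calc (m - ((5673 : ℝ)/2048))^5 = (m - ((5673 : ℝ)/2048))^4 * (m - ((5673 : ℝ)/2048)) := by ring
      _ ≤ ((6615 : ℝ)/4096)^4 * (m - ((5673 : ℝ)/2048)) := mul_le_mul_of_nonneg_right (pow_le_pow_left₀ t0 hh _) t0
  have q6 : (m - ((5673 : ℝ)/2048))^6 ≤ ((6615 : ℝ)/4096)^5 * (m - ((5673 : ℝ)/2048)) := by
    calc (m - ((5673 : ℝ)/2048))^6 = (m - ((5673 : ℝ)/2048))^5 * (m - ((5673 : ℝ)/2048)) := by ring
      _ ≤ ((6615 : ℝ)/4096)^5 * (m - ((5673 : ℝ)/2048)) := mul_le_mul_of_nonneg_right (pow_le_pow_left₀ t0 hh _) t0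
  have p7 : (0:ℝ) ≤ (m - ((5673 : ℝ)/2048))^7 := pow_nonneg t0 7
  have p8 : (0:ℝ) ≤ (m - ((5673 : ℝ)/2048))^8 := pow_nonneg t0 8
  have p9 : (0:ℝ) ≤ (m - ((5673 : ℝ)/2048))^9 := pow_nonneg t0 9
  nlinarith [t0, hh, p2, p3, q4, q5, q6, p7, p8, p9]

lemma pos5 (m : ℝ) (ha : ((17961 : ℝ)/4096) ≤ m) (hb : m ≤ ((42537 : ℝ)/8192)) :
    0 < 64*m^9 - 752*m^8 + 2316*m^7 - 109*m^6 - 2830*m^5 + 45*m^4 + 1362*m^3 + 215*m^2 - 149*m - 17 := by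
  have t0 : (0:ℝ) ≤ m - ((17961 : ℝ)/4096) := by linarith
  have hh : m - ((17961 : ℝ)/4096) ≤ ((6615 : ℝ)/8192) := by linarith
  have q2 : (m - ((17961 : ℝ)/4096))^2 ≤ ((6615 : ℝ)/8192)^1 * (m - ((17961 : ℝ)/4096)) := by
    calc (m - ((17961 : ℝ)/4096))^2 = (m - ((17961 : ℝ)/4096))^1 * (m - ((17961 : ℝ)/4096)) := by ring
      _ ≤ ((6615 : ℝ)/8192)^1 * (m - ((17961 : ℝ)/4096)) := mul_le_mul_of_nonneg_right (pow_le_pow_left₀ t0 hh _) t0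
  have q3 : (m - ((17961 : ℝ)/4096))^3 ≤ ((6615 : ℝ)/8192)^2 * (m - ((17961 : ℝ)/4096)) := by
    calc (m - ((17961 : ℝ)/4096))^3 = (m - ((17961 : ℝ)/4096))^2 * (m - ((17961 : ℝ)/4096)) := by ring
      _ ≤ ((6615 : ℝ)/8192)^2 * (m - ((17961 : ℝ)/4096)) := mul_le_mul_of_nonneg_right (pow_le_pow_left₀ t0 hh _) t0
  have p4 : (0:ℝ) ≤ (m - ((17961 : ℝ)/4096))^4 := pow_nonneg t0 4
  have p5 : (0:ℝ) ≤ (m - ((17961 : ℝ)/4096))^5 := pow_nonneg t0 5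
  have p6 : (0:ℝ) ≤ (m - ((17961 : ℝ)/4096))^6 := pow_nonneg t0 6
  have p7 : (0:ℝ) ≤ (m - ((17961 : ℝ)/4096))^7 := pow_nonneg t0 7
  have p8 : (0:ℝ) ≤ (m - ((17961 : ℝ)/4096))^8 := pow_nonneg t0 8
  have p9 : (0:ℝ) ≤ (m - ((17961 : ℝ)/4096))^9 := pow_nonneg t0 9
  nlinarith [t0, hh, q2, q3, p4, p5, p6, p7, p8, p9]

lemma pos6 (m : ℝ) (ha : ((42537 : ℝ)/8192) ≤ m) (hb : m ≤ ((91689 : ℝ)/16384)) :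
    0 < 64*m^9 - 752*m^8 + 2316*m^7 - 109*m^6 - 2830*m^5 + 45*m^4 + 1362*m^3 + 215*m^2 - 149*m - 17 := by
  have t0 : (0:ℝ) ≤ m - ((42537 : ℝ)/8192) := by linarith
  have hh : m - ((42537 : ℝ)/8192) ≤ ((6615 : ℝ)/16384) := by linarith
  have p2 : (0:ℝ) ≤ (m - ((42537 : ℝ)/8192))^2 := pow_nonneg t0 2
  have p3 : (0:ℝ) ≤ (m - ((42537 : ℝ)/8192))^3 := pow_nonneg t0 3
  have p4 : (0:ℝ) ≤ (m - ((42537 : ℝ)/8192))^4 := pow_nonneg t0 4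
  have p5 : (0:ℝ) ≤ (m - ((42537 : ℝ)/8192))^5 := pow_nonneg t0 5
  have p6 : (0:ℝ) ≤ (m - ((42537 : ℝ)/8192))^6 := pow_nonneg t0 6
  have p7 : (0:ℝ) ≤ (m - ((42537 : ℝ)/8192))^7 := pow_nonneg t0 7
  have p8 : (0:ℝ) ≤ (m - ((42537 : ℝ)/8192))^8 := pow_nonneg t0 8
  have p9 : (0:ℝ) ≤ (m - ((42537 : ℝ)/8192))^9 := pow_nonneg t0 9
  nlinarith [t0, hh, p2, p3, p4, p5, p6, p7, p8, p9]

lemma pos7 (m : ℝ) (ha : ((91689 : ℝ)/16384) ≤ m) (hb : m ≤ (6 : ℝ)) :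
    0 < 64*m^9 - 752*m^8 + 2316*m^7 - 109*m^6 - 2830*m^5 + 45*m^4 + 1362*m^3 + 215*m^2 - 149*m - 17 := by
  have t0 : (0:ℝ) ≤ m - ((91689 : ℝ)/16384) := by linarith
  have hh : m - ((91689 : ℝ)/16384) ≤ ((6615 : ℝ)/16384) := by linarith
  have p2 : (0:ℝ) ≤ (m - ((91689 : ℝ)/16384))^2 := pow_nonneg t0 2
  have p3 : (0:ℝ) ≤ (m - ((91689 : ℝ)/16384))^3 := pow_nonneg t0 3
  have p4 : (0:ℝ) ≤ (m - ((91689 : ℝ)/16384))^4 := pow_nonneg t0 4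
  have p5 : (0:ℝ) ≤ (m - ((91689 : ℝ)/16384))^5 := pow_nonneg t0 5
  have p6 : (0:ℝ) ≤ (m - ((91689 : ℝ)/16384))^6 := pow_nonneg t0 6
  have p7 : (0:ℝ) ≤ (m - ((91689 : ℝ)/16384))^7 := pow_nonneg t0 7
  have p8 : (0:ℝ) ≤ (m - ((91689 : ℝ)/16384))^8 := pow_nonneg t0 8
  have p9 : (0:ℝ) ≤ (m - ((91689 : ℝ)/16384))^9 := pow_nonneg t0 9
  nlinarith [t0, hh, p2, p3, p4, p5, p6, p7, p8, p9]

lemma pos_mid (m : ℝ) (ha : ((2:ℝ)/5) ≤ m) (hb : m ≤ 6) : 0 < massPoly2 m := by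
  unfold massPoly2
  rcases le_or_gt m ((3 : ℝ)/4) with h|h
  · exact pos0 m (by linarith) h
  rcases le_or_gt m ((69 : ℝ)/64) with h|h
  · exact pos1 m (by linarith) h
  rcases le_or_gt m ((867 : ℝ)/512) with h|h
  · exact pos2 m (by linarith) h
  rcases le_or_gt m ((5673 : ℝ)/2048) with h|h
  · exact pos3 m (by linarith) h
  rcases le_or_gt m ((17961 : ℝ)/4096) with h|h
  · exact pos4 m (by linarith) h
  rcases le_or_gt m ((42537 : ℝ)/8192) with h|h
  · exact pos5 m (by linarith) h
  rcases le_or_gt m ((91689 : ℝ)/16384) with h|h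
  · exact pos6 m (by linarith) h
  exact pos7 m (by linarith) hb
lemma pos_tail (m : ℝ) (hm : (6:ℝ) ≤ m) : 0 < massPoly2 m := by
  unfold massPoly2
  have t0 : (0:ℝ) ≤ m - 6 := by linarith
  nlinarith [pow_nonneg t0 2, pow_nonneg t0 3, pow_nonneg t0 4, pow_nonneg t0 5,
    pow_nonneg t0 6, pow_nonneg t0 7, pow_nonneg t0 8, pow_nonneg t0 9, t0]

lemma neg_small (m : ℝ) (h0 : 0 < m) (hm : m ≤ (3:ℝ)/10) : massPoly2 m < 0 := by
  unfold massPoly2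
  have h0' : (0:ℝ) ≤ m := h0.le
  have q2 : m^2 ≤ ((3:ℝ)/10)^1 * m := by
    calc m^2 = m^1 * m := by ring
      _ ≤ ((3:ℝ)/10)^1 * m := mul_le_mul_of_nonneg_right (pow_le_pow_left₀ h0' hm _) h0'
  have q3 : m^3 ≤ ((3:ℝ)/10)^2 * m := by
    calc m^3 = m^2 * m := by ring
      _ ≤ ((3:ℝ)/10)^2 * m := mul_le_mul_of_nonneg_right (pow_le_pow_left₀ h0' hm _) h0'
  have q4 : m^4 ≤ ((3:ℝ)/10)^3 * m := by
    calc m^4 = m^3 * m := by ring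
      _ ≤ ((3:ℝ)/10)^3 * m := mul_le_mul_of_nonneg_right (pow_le_pow_left₀ h0' hm _) h0'
  have q7 : m^7 ≤ ((3:ℝ)/10)^6 * m := by
    calc m^7 = m^6 * m := by ring
      _ ≤ ((3:ℝ)/10)^6 * m := mul_le_mul_of_nonneg_right (pow_le_pow_left₀ h0' hm _) h0'
  have q9 : m^9 ≤ ((3:ℝ)/10)^8 * m := by
    calc m^9 = m^8 * m := by ring
      _ ≤ ((3:ℝ)/10)^8 * m := mul_le_mul_of_nonneg_right (pow_le_pow_left₀ h0' hm _) h0'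
  have p5 : (0:ℝ) ≤ m^5 := pow_nonneg h0' 5
  have p6 : (0:ℝ) ≤ m^6 := pow_nonneg h0' 6
  have p8 : (0:ℝ) ≤ m^8 := pow_nonneg h0' 8
  nlinarith [q2, q3, q4, q7, q9, p5, p6, p8, h0, hm]

lemma massPoly2_hasDerivAt (x : ℝ) :
    HasDerivAt massPoly2 (576*x^8 - 6016*x^7 + 16212*x^6 - 654*x^5 - 14150*x^4
      + 180*x^3 + 4086*x^2 + 430*x - 149) x := by
  have h : HasDerivAt (fun y : ℝ => 64*y^9 - 752*y^8 + 2316*y^7 - 109*y^6 - 2830*y^5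
      + 45*y^4 + 1362*y^3 + 215*y^2 - 149*y - 17)
      (64*(9*x^8) - 752*(8*x^7) + 2316*(7*x^6) - 109*(6*x^5) - 2830*(5*x^4)
        + 45*(4*x^3) + 1362*(3*x^2) + 215*(2*x^1) - 149*1 - 0) x := by
    exact (((((((((((hasDerivAt_pow 9 x).const_mul (64:ℝ)).sub
      ((hasDerivAt_pow 8 x).const_mul (752:ℝ))).add
      ((hasDerivAt_pow 7 x).const_mul (2316:ℝ))).sub
      ((hasDerivAt_pow 6 x).const_mul (109:ℝ))).sub
      ((hasDerivAt_pow 5 x).const_mul (2830:ℝ))).add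
      ((hasDerivAt_pow 4 x).const_mul (45:ℝ))).add
      ((hasDerivAt_pow 3 x).const_mul (1362:ℝ))).add
      ((hasDerivAt_pow 2 x).const_mul (215:ℝ))).sub
      ((hasDerivAt_id x).const_mul (149:ℝ))).sub (hasDerivAt_const x (17:ℝ)))
  have h2 := h
  unfold massPoly2
  convert h2 using 1
  ring

lemma massPoly2_mono : StrictMonoOn massPoly2 (Set.Icc ((3:ℝ)/10) ((2:ℝ)/5)) := by
  apply strictMonoOn_of_deriv_pos (convex_Icc _ _)
  · exact Continuous.continuousOn (by
      unfold massPoly2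
      continuity)
  · intro x hx
    rw [interior_Icc] at hx
    rw [(massPoly2_hasDerivAt x).deriv]
    exact dpos x hx.1.le hx.2.le

lemma massPoly2_continuous : Continuous massPoly2 := by
  unfold massPoly2
  continuity

lemma eval_341 : massPoly2 ((341:ℝ)/1000) < 0 := by
  unfold massPoly2
  norm_num

lemma eval_343 : 0 < massPoly2 ((343:ℝ)/1000) := by
  unfold massPoly2
  norm_num

lemma root_loc (m : ℝ) (h0 : 0 < m) (hr : massPoly2 m = 0) :
    (341:ℝ)/1000 < m ∧ m < (343:ℝ)/1000 := by
  constructor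
  · by_contra h
    push_neg at h
    rcases le_or_gt m ((3:ℝ)/10) with h1|h1
    · exact absurd hr (ne_of_lt (neg_small m h0 h1))
    · have hm : m ∈ Set.Icc ((3:ℝ)/10) ((2:ℝ)/5) := ⟨h1.le, by linarith⟩
      have h341 : ((341:ℝ)/1000) ∈ Set.Icc ((3:ℝ)/10) ((2:ℝ)/5) := by
        constructor <;> norm_num
      have : massPoly2 m ≤ massPoly2 ((341:ℝ)/1000) := by
        rcases eq_or_lt_of_le h with h'|h'
        · rw [h']
        · exact (massPoly2_mono hm h341 h').le
      linarith [eval_341]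
  · by_contra h
    push_neg at h
    rcases le_or_gt m ((2:ℝ)/5) with h1|h1
    · have hm : m ∈ Set.Icc ((3:ℝ)/10) ((2:ℝ)/5) := ⟨by linarith, h1⟩
      have h343 : ((343:ℝ)/1000) ∈ Set.Icc ((3:ℝ)/10) ((2:ℝ)/5) := by
        constructor <;> norm_num
      have : massPoly2 ((343:ℝ)/1000) ≤ massPoly2 m := by
        rcases eq_or_lt_of_le h with h'|h'
        · rw [h']
        · exact (massPoly2_mono h343 hm h').le
      linarith [eval_343]
    · rcases le_or_gt m 6 with h2|h2
      · have := pos_mid m (by linarith) h2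
        linarith
      · have := pos_tail m h2.le
        linarith

/-- The mass polynomial has exactly one positive real root, and that root lies
in the interval `(0.341, 0.343)`. -/
theorem stmt_2 :
    (∃! m : ℝ, 0 < m ∧ massPoly2 m = 0) ∧
    (∀ m : ℝ, 0 < m → massPoly2 m = 0 → 0.341 < m ∧ m < 0.343) := by
  have key : ∀ m : ℝ, 0 < m → massPoly2 m = 0 → 0.341 < m ∧ m < 0.343 := by
    intro m h0 hr
    have := root_loc m h0 hr
    constructor
    · calc (0.341:ℝ) = 341/1000 := by norm_num
        _ < m := this.1
    · calc m < (343:ℝ)/1000 := this.2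
        _ = 0.343 := by norm_num
  refine ⟨?_, key⟩
  -- existence via IVT
  have hsub : Set.Ioo (massPoly2 ((341:ℝ)/1000)) (massPoly2 ((343:ℝ)/1000)) ⊆
      massPoly2 '' Set.Ioo ((341:ℝ)/1000) ((343:ℝ)/1000) :=
    intermediate_value_Ioo (by norm_num) massPoly2_continuous.continuousOn
  have h0mem : (0:ℝ) ∈ Set.Ioo (massPoly2 ((341:ℝ)/1000)) (massPoly2 ((343:ℝ)/1000)) :=
    ⟨eval_341, eval_343⟩
  obtain ⟨r, hr, hr0⟩ := hsub h0mem
  refine ⟨r, ⟨by nlinarith [hr.1], hr0⟩, ?_⟩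
  rintro y ⟨hy0, hyr⟩
  have hy := root_loc y hy0 hyr
  have hrcl := root_loc r (by nlinarith [hr.1]) hr0
  have hyI : y ∈ Set.Icc ((3:ℝ)/10) ((2:ℝ)/5) := ⟨by linarith [hy.1], by linarith [hy.2]⟩
  have hrI : r ∈ Set.Icc ((3:ℝ)/10) ((2:ℝ)/5) := ⟨by linarith [hrcl.1], by linarith [hrcl.2]⟩
  exact massPoly2_mono.injOn hyI hrI (by rw [hyr, hr0])
end

section
/- Consider a planar convex equilateral pentagonal central configuration with positive masses m1,...,m5, exponent A > 0, vertices in convex position in cyclic order 1,2,3,4,5, and all five sides equal: r12 = r23 = r34 = r45 = r51. Then all five diagonals are strictly longer than the common side: r13, r14, r24, r25, r35 > r12. -/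
open Finset

/-- Euclidean distance between two points of the plane `ℝ × ℝ`. -/
noncomputable def d (p q : ℝ × ℝ) : ℝ := Real.sqrt ((p.1 - q.1)^2 + (p.2 - q.2)^2)

/-- Wedge (cross) product of two planar vectors. -/
def wedge (u v : ℝ × ℝ) : ℝ := u.1 * v.2 - u.2 * v.1

/-- Center of mass of a configuration. -/
noncomputable def ctr {n : ℕ} (m : Fin n → ℝ) (q : Fin n → ℝ × ℝ) : ℝ × ℝ :=
  (∑ i, m i)⁻¹ • ∑ i, m i • q i

/-- `q` is a central configuration for exponent `A`, masses `m`, multiplier `lam`. -/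
noncomputable def IsCC {n : ℕ} (A : ℝ) (m : Fin n → ℝ) (q : Fin n → ℝ × ℝ) (lam : ℝ) : Prop :=
  ∀ i, lam • (q i - ctr m q) =
    ∑ j ∈ univ.erase i, (m j / d (q i) (q j) ^ A) • (q i - q j)

/- ### Auxiliary lemmas -/

lemma d_nonneg' (p q : ℝ × ℝ) : 0 ≤ d p q := Real.sqrt_nonneg _

lemma d_symm' (p q : ℝ × ℝ) : d p q = d q p := by
  unfold d; rw [show (p.1 - q.1)^2 + (p.2 - q.2)^2 = (q.1 - p.1)^2 + (q.2 - p.2)^2 by ring]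

lemma d_sq' (p q : ℝ × ℝ) : d p q ^ 2 = (p.1 - q.1)^2 + (p.2 - q.2)^2 :=
  Real.sq_sqrt (by positivity)

lemma d_pos' {p q : ℝ × ℝ} (h : p ≠ q) : 0 < d p q := by
  have h' : ¬(p.1 = q.1 ∧ p.2 = q.2) := fun hc => h (Prod.ext hc.1 hc.2)
  apply Real.sqrt_pos.2
  rcases not_and_or.1 h' with h'' | h''
  · have : 0 < (p.1 - q.1)^2 := sq_pos_of_ne_zero (sub_ne_zero.2 h'')
    nlinarith [sq_nonneg (p.2 - q.2)]
  · have : 0 < (p.2 - q.2)^2 := sq_pos_of_ne_zero (sub_ne_zero.2 h'')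
    nlinarith [sq_nonneg (p.1 - q.1)]

lemma ip_le' (x y z : ℝ × ℝ) :
    (x.1-y.1)*(y.1-z.1) + (x.2-y.2)*(y.2-z.2) ≤ d x y * d y z := by
  have e1 := d_sq' x y; have e2 := d_sq' y z
  have h1 := d_nonneg' x y; have h2 := d_nonneg' y z
  have hsq : (d x y * d y z)^2 =
      ((x.1-y.1)*(y.1-z.1) + (x.2-y.2)*(y.2-z.2))^2
      + ((x.1-y.1)*(y.2-z.2) - (x.2-y.2)*(y.1-z.1))^2 := by
    rw [mul_pow, e1, e2]; ring
  nlinarith [sq_nonneg ((x.1-y.1)*(y.2-z.2) - (x.2-y.2)*(y.1-z.1)), mul_nonneg h1 h2]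

lemma ip_lt' (x y z : ℝ × ℝ) (hw : (x.1-y.1)*(y.2-z.2) - (x.2-y.2)*(y.1-z.1) ≠ 0) :
    (x.1-y.1)*(y.1-z.1) + (x.2-y.2)*(y.2-z.2) < d x y * d y z := by
  have e1 := d_sq' x y; have e2 := d_sq' y z
  have h1 := d_nonneg' x y; have h2 := d_nonneg' y z
  have hsq : (d x y * d y z)^2 =
      ((x.1-y.1)*(y.1-z.1) + (x.2-y.2)*(y.2-z.2))^2
      + ((x.1-y.1)*(y.2-z.2) - (x.2-y.2)*(y.1-z.1))^2 := by
    rw [mul_pow, e1, e2]; ring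
  have hw2 : 0 < ((x.1-y.1)*(y.2-z.2) - (x.2-y.2)*(y.1-z.1))^2 := by positivity
  nlinarith [mul_nonneg h1 h2]

lemma tri' (x y z : ℝ × ℝ) : d x z ≤ d x y + d y z := by
  have key := ip_le' x y z
  have e1 := d_sq' x y; have e2 := d_sq' y z; have e3 := d_sq' x z
  have h1 := d_nonneg' x y; have h2 := d_nonneg' y z; have h3 := d_nonneg' x z
  nlinarith [key, e1, e2, e3]

lemma tri_strict' (x y z : ℝ × ℝ) (h : wedge (y - x) (z - x) ≠ 0) :
    d x z < d x y + d y z := by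
  have hw : (x.1-y.1)*(y.2-z.2) - (x.2-y.2)*(y.1-z.1) ≠ 0 := by
    intro hc; apply h
    simp only [wedge, Prod.fst_sub, Prod.snd_sub]
    nlinarith [hc]
  have key := ip_lt' x y z hw
  have e1 := d_sq' x y; have e2 := d_sq' y z; have e3 := d_sq' x z
  have h1 := d_nonneg' x y; have h2 := d_nonneg' y z; have h3 := d_nonneg' x z
  nlinarith [key, e1, e2, e3]

lemma d_seg1' (p q : ℝ × ℝ) (t : ℝ) (h0 : 0 ≤ t) :
    d p (p + t • (q - p)) = t * d p q := by
  unfold d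
  simp only [Prod.fst_add, Prod.snd_add, Prod.smul_fst, Prod.smul_snd, Prod.fst_sub,
    Prod.snd_sub, smul_eq_mul]
  rw [show (p.1 - (p.1 + t * (q.1 - p.1)))^2 + (p.2 - (p.2 + t * (q.2 - p.2)))^2
      = t^2 * ((p.1 - q.1)^2 + (p.2 - q.2)^2) by ring,
    Real.sqrt_mul (sq_nonneg t), Real.sqrt_sq h0]

lemma d_seg2' (p q : ℝ × ℝ) (t : ℝ) (h1 : t ≤ 1) :
    d (p + t • (q - p)) q = (1 - t) * d p q := by
  unfold d
  simp only [Prod.fst_add, Prod.snd_add, Prod.smul_fst, Prod.smul_snd, Prod.fst_sub,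
    Prod.snd_sub, smul_eq_mul]
  rw [show (p.1 + t * (q.1 - p.1) - q.1)^2 + (p.2 + t * (q.2 - p.2) - q.2)^2
      = (1 - t)^2 * ((p.1 - q.1)^2 + (p.2 - q.2)^2) by ring,
    Real.sqrt_mul (sq_nonneg (1 - t)), Real.sqrt_sq (by linarith)]

/-- In a convex quadrilateral the sum of the diagonals strictly exceeds the sum
of one pair of opposite sides. -/
lemma quad' (a b c e : ℝ × ℝ) (h1 : 0 < wedge (b-a) (c-a)) (h2 : 0 < wedge (b-a) (e-a))
    (h3 : 0 < wedge (c-a) (e-a)) (h4 : 0 < wedge (c-b) (e-b)) :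
    d a b + d c e < d a c + d b e := by
  have hDm : wedge (c-a) (e-b) = wedge (b-a) (c-a) + wedge (c-a) (e-a) := by
    simp only [wedge, Prod.fst_sub, Prod.snd_sub]; ring
  set Dm := wedge (c-a) (e-b) with hDmdef
  have hDmpos : 0 < Dm := by rw [hDm]; linarith
  set t : ℝ := wedge (b-a) (e-a) / Dm with ht
  set u : ℝ := wedge (b-a) (c-a) / Dm with hu
  have ht0 : 0 < t := div_pos h2 hDmpos
  have hu0 : 0 < u := div_pos h1 hDmpos
  have hid : wedge (b-a) (c-a) + wedge (c-a) (e-a) = wedge (b-a) (e-a) + wedge (c-b) (e-b) := by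
    simp only [wedge, Prod.fst_sub, Prod.snd_sub]; ring
  have ht1 : t < 1 := by
    rw [ht, div_lt_one hDmpos, hDm]; linarith
  have hu1 : u < 1 := by
    rw [hu, div_lt_one hDmpos, hDm]; linarith
  set P : ℝ × ℝ := a + t • (c - a) with hP
  have hne : Dm ≠ 0 := ne_of_gt hDmpos
  have htm : t * Dm = wedge (b-a) (e-a) := div_mul_cancel₀ _ hne
  have hum : u * Dm = wedge (b-a) (c-a) := div_mul_cancel₀ _ hne
  have hPb : P = b + u • (e - b) := by
    apply Prod.ext
    · apply mul_left_cancel₀ hne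
      have lhs : Dm * (P.1) = Dm * a.1 + (t * Dm) * (c.1 - a.1) := by
        simp only [hP, Prod.fst_add, Prod.smul_fst, Prod.fst_sub, smul_eq_mul]; ring
      have rhs : Dm * ((b + u • (e - b)).1) = Dm * b.1 + (u * Dm) * (e.1 - b.1) := by
        simp only [Prod.fst_add, Prod.smul_fst, Prod.fst_sub, smul_eq_mul]; ring
      rw [lhs, rhs, htm, hum, hDmdef]
      simp only [wedge, Prod.fst_sub, Prod.snd_sub]; ring
    · apply mul_left_cancel₀ hne
      have lhs : Dm * (P.2) = Dm * a.2 + (t * Dm) * (c.2 - a.2) := by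
        simp only [hP, Prod.snd_add, Prod.smul_snd, Prod.snd_sub, smul_eq_mul]; ring
      have rhs : Dm * ((b + u • (e - b)).2) = Dm * b.2 + (u * Dm) * (e.2 - b.2) := by
        simp only [Prod.snd_add, Prod.smul_snd, Prod.snd_sub, smul_eq_mul]; ring
      rw [lhs, rhs, htm, hum, hDmdef]
      simp only [wedge, Prod.fst_sub, Prod.snd_sub]; ring
  have hac : d a P + d P c = d a c := by
    rw [hP, d_seg1' a c t (le_of_lt ht0), d_seg2' a c t (le_of_lt ht1)]; ring
  have hbe : d b P + d P e = d b e := by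
    rw [hPb, d_seg1' b e u (le_of_lt hu0), d_seg2' b e u (le_of_lt hu1)]; ring
  have tab : d a b < d a P + d P b := by
    apply tri_strict'
    intro hc
    have hval : wedge (P - a) (b - a) = - (t * wedge (b - a) (c - a)) := by
      simp only [hP, wedge, Prod.fst_add, Prod.snd_add, Prod.smul_fst, Prod.smul_snd,
        Prod.fst_sub, Prod.snd_sub, smul_eq_mul]
      ring
    rw [hc] at hval
    have := mul_pos ht0 h1
    linarith
  have tce : d c e ≤ d c P + d P e := tri' c P e
  have dPc : d P c = d c P := d_symm' _ _
  have dPb : d P b = d b P := d_symm' _ _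
  linarith

/-- Generalized Laura–Andoyer equation for a planar 5-body central configuration. -/
lemma LA_gen' (A : ℝ) (m : Fin 5 → ℝ) (q : Fin 5 → ℝ × ℝ) (lam : ℝ)
    (hcc : IsCC A m q lam) (i j : Fin 5) :
    ∑ k : Fin 5, m k * (1 / d (q j) (q k) ^ A - 1 / d (q i) (q k) ^ A)
      * wedge (q j - q i) (q k - q i) = 0 := by
  have Hi := hcc i
  have Hj := hcc j
  rw [Finset.sum_erase_eq_sub (mem_univ i)] at Hi
  rw [Finset.sum_erase_eq_sub (mem_univ j)] at Hj
  rw [sub_self, smul_zero, sub_zero, Fin.sum_univ_five] at Hi Hj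
  have Hi1 := congrArg Prod.fst Hi
  have Hi2 := congrArg Prod.snd Hi
  have Hj1 := congrArg Prod.fst Hj
  have Hj2 := congrArg Prod.snd Hj
  simp only [Prod.fst_add, Prod.snd_add, Prod.fst_sub, Prod.snd_sub, Prod.smul_fst,
    Prod.smul_snd, smul_eq_mul] at Hi1 Hi2 Hj1 Hj2
  rw [Fin.sum_univ_five]
  simp only [wedge, Prod.fst_sub, Prod.snd_sub]
  linear_combination (((q j).2 - (q i).2)) * Hi1 - (((q j).1 - (q i).1)) * Hi2
    + ((q i).2 - (q j).2) * Hj1 - ((q i).1 - (q j).1) * Hj2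

lemma signlink' {a b wa wb x y : ℝ} (ha : 0 < a) (hb : 0 < b) (hwa : 0 < wa) (hwb : 0 < wb)
    (h : a * x * wa = b * y * wb) : (0 < x ↔ 0 < y) := by
  constructor
  · intro h'
    nlinarith [mul_pos (mul_pos ha h') hwa, mul_pos hb hwb]
  · intro h'
    nlinarith [mul_pos (mul_pos hb h') hwb, mul_pos ha hwa]

lemma Rlt' (A : ℝ) (hA : 0 < A) {s x : ℝ} (hs : 0 < s) (hx : 0 < x) :
    (0 < 1 / s ^ A - 1 / x ^ A) ↔ s < x := by
  rw [sub_pos]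
  exact (one_div_lt_one_div (Real.rpow_pos_of_pos hx A) (Real.rpow_pos_of_pos hs A)).trans
    (Real.rpow_lt_rpow_iff hs.le hx.le hA)

lemma wedge_zero_left' (v : ℝ × ℝ) : wedge 0 v = 0 := by simp [wedge]

lemma wedge_zero_right' (v : ℝ × ℝ) : wedge v 0 = 0 := by simp [wedge]

lemma wedge_self' (u : ℝ × ℝ) : wedge u u = 0 := by simp [wedge, mul_comm]

lemma wedge_ne₁' {x y z : ℝ × ℝ} (h : 0 < wedge (y - x) (z - x)) : x ≠ y := by
  intro he
  rw [he, sub_self, wedge_zero_left'] at h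
  exact lt_irrefl _ h

lemma wedge_ne₂' {x y z : ℝ × ℝ} (h : 0 < wedge (y - x) (z - x)) : x ≠ z := by
  intro he
  rw [he, sub_self, wedge_zero_right'] at h
  exact lt_irrefl _ h

lemma wedge_ne₃' {x y z : ℝ × ℝ} (h : 0 < wedge (y - x) (z - x)) : y ≠ z := by
  intro he
  rw [he, wedge_self'] at h
  exact lt_irrefl _ h

/-- For a planar convex equilateral pentagonal central configuration with
positive masses, all five diagonals are strictly longer than the common side. -/
theorem stmt_6 (A : ℝ) (hA : 0 < A) (m : Fin 5 → ℝ) (hm : ∀ i, 0 < m i)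
    (q : Fin 5 → ℝ × ℝ) (lam : ℝ) (hcc : IsCC A m q lam)
    (hconv : ∀ i j k : Fin 5, i < j → j < k → 0 < wedge (q j - q i) (q k - q i))
    (h1 : d (q 0) (q 1) = d (q 1) (q 2)) (h2 : d (q 1) (q 2) = d (q 2) (q 3))
    (h3 : d (q 2) (q 3) = d (q 3) (q 4)) (h4 : d (q 3) (q 4) = d (q 4) (q 0)) :
    d (q 0) (q 1) < d (q 0) (q 2) ∧ d (q 0) (q 1) < d (q 0) (q 3) ∧
    d (q 0) (q 1) < d (q 1) (q 3) ∧ d (q 0) (q 1) < d (q 1) (q 4) ∧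
    d (q 0) (q 1) < d (q 2) (q 4) := by
  -- convexity wedges
  have W012 := hconv 0 1 2 (by decide) (by decide)
  have W013 := hconv 0 1 3 (by decide) (by decide)
  have W014 := hconv 0 1 4 (by decide) (by decide)
  have W023 := hconv 0 2 3 (by decide) (by decide)
  have W024 := hconv 0 2 4 (by decide) (by decide)
  have W034 := hconv 0 3 4 (by decide) (by decide)
  have W123 := hconv 1 2 3 (by decide) (by decide)
  have W124 := hconv 1 2 4 (by decide) (by decide)
  have W134 := hconv 1 3 4 (by decide) (by decide)
  have W234 := hconv 2 3 4 (by decide) (by decide)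
  -- side equalities, oriented both ways
  have s12 : d (q 1) (q 2) = d (q 0) (q 1) := h1.symm
  have s23 : d (q 2) (q 3) = d (q 0) (q 1) := (h1.trans h2).symm
  have s34 : d (q 3) (q 4) = d (q 0) (q 1) := (h1.trans (h2.trans h3)).symm
  have s40 : d (q 4) (q 0) = d (q 0) (q 1) := (h1.trans (h2.trans (h3.trans h4))).symm
  have s10 : d (q 1) (q 0) = d (q 0) (q 1) := d_symm' _ _
  have s21 : d (q 2) (q 1) = d (q 0) (q 1) := (d_symm' _ _).trans s12
  have s32 : d (q 3) (q 2) = d (q 0) (q 1) := (d_symm' _ _).trans s23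
  have s43 : d (q 4) (q 3) = d (q 0) (q 1) := (d_symm' _ _).trans s34
  have s04 : d (q 0) (q 4) = d (q 0) (q 1) := (d_symm' _ _).trans s40
  -- diagonal orientations
  have D20 : d (q 2) (q 0) = d (q 0) (q 2) := d_symm' _ _
  have D30 : d (q 3) (q 0) = d (q 0) (q 3) := d_symm' _ _
  have D31 : d (q 3) (q 1) = d (q 1) (q 3) := d_symm' _ _
  have D41 : d (q 4) (q 1) = d (q 1) (q 4) := d_symm' _ _
  have D42 : d (q 4) (q 2) = d (q 2) (q 4) := d_symm' _ _
  -- positivity of distances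
  have hs : 0 < d (q 0) (q 1) := d_pos' (wedge_ne₁' W012)
  have p02 : 0 < d (q 0) (q 2) := d_pos' (wedge_ne₁' W023)
  have p03 : 0 < d (q 0) (q 3) := d_pos' (wedge_ne₁' W034)
  have p13 : 0 < d (q 1) (q 3) := d_pos' (wedge_ne₁' W134)
  have p14 : 0 < d (q 1) (q 4) := d_pos' (wedge_ne₂' W134)
  have p24 : 0 < d (q 2) (q 4) := d_pos' (wedge_ne₂' W234)
  -- rotated wedge positivity
  have W130 : 0 < wedge (q 3 - q 1) (q 0 - q 1) := by
    have hrot : wedge (q 3 - q 1) (q 0 - q 1) = wedge (q 1 - q 0) (q 3 - q 0) := by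
      simp only [wedge, Prod.fst_sub, Prod.snd_sub]; ring
    rw [hrot]; exact W013
  have W240 : 0 < wedge (q 4 - q 2) (q 0 - q 2) := by
    have hrot : wedge (q 4 - q 2) (q 0 - q 2) = wedge (q 2 - q 0) (q 4 - q 0) := by
      simp only [wedge, Prod.fst_sub, Prod.snd_sub]; ring
    rw [hrot]; exact W024
  have W241 : 0 < wedge (q 4 - q 2) (q 1 - q 2) := by
    have hrot : wedge (q 4 - q 2) (q 1 - q 2) = wedge (q 2 - q 1) (q 4 - q 1) := by
      simp only [wedge, Prod.fst_sub, Prod.snd_sub]; ring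
    rw [hrot]; exact W124
  have W301 : 0 < wedge (q 0 - q 3) (q 1 - q 3) := by
    have hrot : wedge (q 0 - q 3) (q 1 - q 3) = wedge (q 1 - q 0) (q 3 - q 0) := by
      simp only [wedge, Prod.fst_sub, Prod.snd_sub]; ring
    rw [hrot]; exact W013
  have W302 : 0 < wedge (q 0 - q 3) (q 2 - q 3) := by
    have hrot : wedge (q 0 - q 3) (q 2 - q 3) = wedge (q 2 - q 0) (q 3 - q 0) := by
      simp only [wedge, Prod.fst_sub, Prod.snd_sub]; ring
    rw [hrot]; exact W023
  have W412 : 0 < wedge (q 1 - q 4) (q 2 - q 4) := by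
    have hrot : wedge (q 1 - q 4) (q 2 - q 4) = wedge (q 2 - q 1) (q 4 - q 1) := by
      simp only [wedge, Prod.fst_sub, Prod.snd_sub]; ring
    rw [hrot]; exact W124
  have W413 : 0 < wedge (q 1 - q 4) (q 3 - q 4) := by
    have hrot : wedge (q 1 - q 4) (q 3 - q 4) = wedge (q 3 - q 1) (q 4 - q 1) := by
      simp only [wedge, Prod.fst_sub, Prod.snd_sub]; ring
    rw [hrot]; exact W134
  -- Laura–Andoyer links
  have E02 := LA_gen' A m q lam hcc 0 2
  have E13 := LA_gen' A m q lam hcc 1 3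
  have E24 := LA_gen' A m q lam hcc 2 4
  have E30 := LA_gen' A m q lam hcc 3 0
  have E41 := LA_gen' A m q lam hcc 4 1
  rw [Fin.sum_univ_five] at E02 E13 E24 E30 E41
  simp only [s12, s23, s34, s40, s10, s21, s32, s43, s04, D20, D30, D31, D41, D42]
    at E02 E13 E24 E30 E41
  have L02 : m 3 * (1 / d (q 0) (q 1) ^ A - 1 / d (q 0) (q 3) ^ A) * wedge (q 2 - q 0) (q 3 - q 0)
      = m 4 * (1 / d (q 0) (q 1) ^ A - 1 / d (q 2) (q 4) ^ A) * wedge (q 2 - q 0) (q 4 - q 0) := by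
    simp only [wedge, Prod.fst_sub, Prod.snd_sub] at E02 ⊢
    linear_combination E02
  have L13 : m 4 * (1 / d (q 0) (q 1) ^ A - 1 / d (q 1) (q 4) ^ A) * wedge (q 3 - q 1) (q 4 - q 1)
      = m 0 * (1 / d (q 0) (q 1) ^ A - 1 / d (q 0) (q 3) ^ A) * wedge (q 3 - q 1) (q 0 - q 1) := by
    simp only [wedge, Prod.fst_sub, Prod.snd_sub] at E13 ⊢
    linear_combination E13
  have L24 : m 0 * (1 / d (q 0) (q 1) ^ A - 1 / d (q 0) (q 2) ^ A) * wedge (q 4 - q 2) (q 0 - q 2)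
      = m 1 * (1 / d (q 0) (q 1) ^ A - 1 / d (q 1) (q 4) ^ A) * wedge (q 4 - q 2) (q 1 - q 2) := by
    simp only [wedge, Prod.fst_sub, Prod.snd_sub] at E24 ⊢
    linear_combination E24
  have L30 : m 1 * (1 / d (q 0) (q 1) ^ A - 1 / d (q 1) (q 3) ^ A) * wedge (q 0 - q 3) (q 1 - q 3)
      = m 2 * (1 / d (q 0) (q 1) ^ A - 1 / d (q 0) (q 2) ^ A) * wedge (q 0 - q 3) (q 2 - q 3) := by
    simp only [wedge, Prod.fst_sub, Prod.snd_sub] at E30 ⊢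
    linear_combination E30
  have L41 : m 2 * (1 / d (q 0) (q 1) ^ A - 1 / d (q 2) (q 4) ^ A) * wedge (q 1 - q 4) (q 2 - q 4)
      = m 3 * (1 / d (q 0) (q 1) ^ A - 1 / d (q 1) (q 3) ^ A) * wedge (q 1 - q 4) (q 3 - q 4) := by
    simp only [wedge, Prod.fst_sub, Prod.snd_sub] at E41 ⊢
    linear_combination E41
  -- sign equivalences
  have J02 : (d (q 0) (q 1) < d (q 0) (q 3)) ↔ (d (q 0) (q 1) < d (q 2) (q 4)) :=
    ((Rlt' A hA hs p03).symm.trans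
      ((signlink' (hm 3) (hm 4) W023 W024 L02).trans (Rlt' A hA hs p24)))
  have J13 : (d (q 0) (q 1) < d (q 1) (q 4)) ↔ (d (q 0) (q 1) < d (q 0) (q 3)) :=
    ((Rlt' A hA hs p14).symm.trans
      ((signlink' (hm 4) (hm 0) W134 W130 L13).trans (Rlt' A hA hs p03)))
  have J24 : (d (q 0) (q 1) < d (q 0) (q 2)) ↔ (d (q 0) (q 1) < d (q 1) (q 4)) :=
    ((Rlt' A hA hs p02).symm.trans
      ((signlink' (hm 0) (hm 1) W240 W241 L24).trans (Rlt' A hA hs p14)))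
  have J30 : (d (q 0) (q 1) < d (q 1) (q 3)) ↔ (d (q 0) (q 1) < d (q 0) (q 2)) :=
    ((Rlt' A hA hs p13).symm.trans
      ((signlink' (hm 1) (hm 2) W301 W302 L30).trans (Rlt' A hA hs p02)))
  have J41 : (d (q 0) (q 1) < d (q 2) (q 4)) ↔ (d (q 0) (q 1) < d (q 1) (q 3)) :=
    ((Rlt' A hA hs p24).symm.trans
      ((signlink' (hm 2) (hm 3) W412 W413 L41).trans (Rlt' A hA hs p13)))
  -- at least one diagonal exceeds the side (convex quadrilateral q0 q1 q2 q3)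
  have hq : d (q 0) (q 1) + d (q 2) (q 3) < d (q 0) (q 2) + d (q 1) (q 3) :=
    quad' (q 0) (q 1) (q 2) (q 3) W012 W013 W023 W123
  rw [s23] at hq
  have hone : d (q 0) (q 1) < d (q 0) (q 2) ∨ d (q 0) (q 1) < d (q 1) (q 3) := by
    by_contra hc
    push_neg at hc
    linarith [hc.1, hc.2]
  have g02 : d (q 0) (q 1) < d (q 0) (q 2) := by
    rcases hone with h | h
    · exact h
    · exact J30.1 h
  have g14 : d (q 0) (q 1) < d (q 1) (q 4) := J24.1 g02
  have g03 : d (q 0) (q 1) < d (q 0) (q 3) := J13.1 g14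
  have g24 : d (q 0) (q 1) < d (q 2) (q 4) := J02.1 g03
  have g13 : d (q 0) (q 1) < d (q 1) (q 3) := J41.1 g24
  exact ⟨g02, g03, g13, g14, g24⟩
end

section
/- Consider a planar symmetric equilateral pentagonal configuration with q1 = (-1/2,0), q2 = (1/2,0), q3 = (x3,y3), q4 = (0,y4), q5 = (-x3,y3), unit sides, and y4 > 0. If it is a central configuration for positive masses m1 = m2, m3 = m5, m4 and exponent A > 0, and if Δ_{135} > 0, Δ_{134} < 0, and r35 < 1 (where Δ_{ijk} are oriented areas and r_{ij} = |q_i - q_j| with r14 < 1), then a contradiction follows: the Laura–Andoyer equation L13 = m3(1 - r35^{-A})Δ_{135} + m4(r14^{-A} - 1)Δ_{134} cannot vanish since both terms are nonzero with the same sign. -/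
open Finset

/-- Oriented area `Δ_{ijk} = (q_i - q_j) × (q_i - q_k)`. -/
def Δ (qi qj qk : ℝ × ℝ) : ℝ := wedge (qi - qj) (qi - qk)

/-- Type A1 symmetric equilateral pentagons admit no central configuration with
positive masses: the sign conditions contradict the Laura–Andoyer equation `L13`. -/
theorem stmt_9 (A : ℝ) (hA : 0 < A) (x3 y3 y4 : ℝ) (hy4 : 0 < y4)
    (q : Fin 5 → ℝ × ℝ)
    (hq0 : q 0 = (-1/2, 0)) (hq1 : q 1 = (1/2, 0)) (hq2 : q 2 = (x3, y3))
    (hq3 : q 3 = (0, y4)) (hq4 : q 4 = (-x3, y3))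
    (h12 : d (q 0) (q 1) = 1) (h23 : d (q 1) (q 2) = 1) (h34 : d (q 2) (q 3) = 1)
    (h45 : d (q 3) (q 4) = 1) (h51 : d (q 4) (q 0) = 1)
    (m : Fin 5 → ℝ) (hm : ∀ i, 0 < m i) (hm12 : m 0 = m 1) (hm35 : m 2 = m 4)
    (lam : ℝ) (hcc : IsCC A m q lam)
    (hΔ135 : 0 < Δ (q 0) (q 2) (q 4))
    (hΔ134 : Δ (q 0) (q 2) (q 3) < 0)
    (hr35 : d (q 2) (q 4) < 1)
    (hr14 : d (q 0) (q 3) < 1) :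
    False := by
  have h0 := hcc 0
  have h2 := hcc 2
  rw [Finset.sum_erase (f := fun j => (m j / d (q 0) (q j) ^ A) • (q 0 - q j)) univ (by simp)] at h0
  rw [Finset.sum_erase (f := fun j => (m j / d (q 2) (q j) ^ A) • (q 2 - q j)) univ (by simp)] at h2
  rw [Fin.sum_univ_five] at h0 h2
  have dcomm : ∀ p r : ℝ × ℝ, d p r = d r p := by intro p r; unfold d; congr 1; ring
  rw [h12, dcomm (q 0) (q 4), h51] at h0
  rw [dcomm (q 2) (q 1), h23, h34] at h2
  simp only [Real.one_rpow, div_one] at h0 h2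
  simp only [hq0, hq1, hq2, hq3, hq4, Prod.ext_iff, Prod.smul_fst, Prod.smul_snd,
    Prod.fst_sub, Prod.snd_sub, Prod.fst_add, Prod.snd_add, smul_eq_mul] at h0 h2
  obtain ⟨h0x, h0y⟩ := h0
  obtain ⟨h2x, h2y⟩ := h2
  -- oriented areas in coordinates
  have hD134 : x3 * y4 + y4 / 2 - y3 / 2 < 0 := by
    have e : Δ (q 0) (q 2) (q 3) = x3 * y4 + y4 / 2 - y3 / 2 := by
      rw [hq0, hq2, hq3]; unfold Δ wedge; simp [Prod.sub_def]; ring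
    linarith [e ▸ hΔ134]
  have hD135 : 0 < 2 * x3 * y3 := by
    have e : Δ (q 0) (q 2) (q 4) = 2 * x3 * y3 := by
      rw [hq0, hq2, hq4]; unfold Δ wedge; simp [Prod.sub_def]; ring
    linarith [e ▸ hΔ135]
  have hx3 : x3 ≠ 0 := by rintro rfl; norm_num at hD135
  -- positivity of the two key distances
  rw [hq0, hq3] at hr14
  rw [hq2, hq4] at hr35
  have hr14pos : 0 < d ((-1/2 : ℝ), (0 : ℝ)) ((0 : ℝ), y4) := by
    have e : d ((-1/2 : ℝ), (0 : ℝ)) ((0 : ℝ), y4) = Real.sqrt ((-1/2 - 0)^2 + (0 - y4)^2) := rfl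
    rw [e]
    apply Real.sqrt_pos.mpr
    nlinarith [sq_nonneg y4]
  have hr35pos : 0 < d ((x3 : ℝ), y3) ((-x3 : ℝ), y3) := by
    have e : d ((x3 : ℝ), y3) ((-x3 : ℝ), y3) = Real.sqrt ((x3 - -x3)^2 + (y3 - y3)^2) := rfl
    rw [e]
    apply Real.sqrt_pos.mpr
    have : x3 - -x3 ≠ 0 := by intro h; apply hx3; linarith [h]
    positivity
  set a := d ((-1/2 : ℝ), (0 : ℝ)) ((0 : ℝ), y4) ^ A with ha_def
  set b := d ((x3 : ℝ), y3) ((-x3 : ℝ), y3) ^ A with hb_def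
  have ha0 : 0 < a := Real.rpow_pos_of_pos hr14pos A
  have ha1 : a < 1 := Real.rpow_lt_one hr14pos.le hr14 hA
  have hb0 : 0 < b := Real.rpow_pos_of_pos hr35pos A
  have hb1 : b < 1 := Real.rpow_lt_one hr35pos.le hr35 hA
  -- the Laura–Andoyer combination
  have key : m 3 * (1 - 1 / a) * (x3 * y4 + y4 / 2 - y3 / 2)
      + m 4 * (1 / b - 1) * (2 * x3 * y3) = 0 := by
    linear_combination y3 * h0x - y3 * h2x - (1/2 + x3) * h0y + (1/2 + x3) * h2y
  have h1a : 1 < 1 / a := by rw [lt_div_iff₀ ha0]; linarith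
  have h1b : 1 < 1 / b := by rw [lt_div_iff₀ hb0]; linarith
  have T1 : 0 < m 3 * (1 - 1 / a) * (x3 * y4 + y4 / 2 - y3 / 2) := by
    calc (0:ℝ) < m 3 * ((1 / a - 1) * (-(x3 * y4 + y4 / 2 - y3 / 2))) :=
          mul_pos (hm 3) (mul_pos (show 0 < 1 / a - 1 by linarith)
            (show 0 < -(x3 * y4 + y4 / 2 - y3 / 2) by linarith))
      _ = m 3 * (1 - 1 / a) * (x3 * y4 + y4 / 2 - y3 / 2) := by ring
  have T2 : 0 < m 4 * (1 / b - 1) * (2 * x3 * y3) := by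
    calc (0:ℝ) < m 4 * ((1 / b - 1) * (2 * x3 * y3)) :=
          mul_pos (hm 4) (mul_pos (show 0 < 1 / b - 1 by linarith) hD135)
      _ = m 4 * (1 / b - 1) * (2 * x3 * y3) := by ring
  linarith
end

section
/- For every A ≥ 2 there exists y4 strictly between (2 - √3)/2 and √(5 - 2√5)/2 along branch A of the symmetric equilateral pentagon family at which F(y4) = 0, where F is the 2x2 determinant (1 - R14)(R35 - 1)Δ_{124}Δ_{345} + (1 - R13)Δ_{134}((R13 - R14)Δ_{134} + (1 - R14)Δ_{145}). -/
/-- The discriminant appearing in the branch-A parameterization. -/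
noncomputable def g (t : ℝ) : ℝ := -16*t^4 + 56*t^2 + 15

/-- `y3` along branch A of the symmetric equilateral pentagon family. -/
noncomputable def y3A (t : ℝ) : ℝ :=
  (8*t^3 + 2*t + Real.sqrt (g t)) / (4*(4*t^2 + 1))

/-- `x3` along branch A of the symmetric equilateral pentagon family. -/
noncomputable def x3A (t : ℝ) : ℝ :=
  (4*t^2 + 1 + 2*t*Real.sqrt (g t)) / (4*(4*t^2 + 1))

/-- The 2×2 minor `F` of the mass-coefficient matrix, evaluated along branch A
of the symmetric equilateral pentagon family, as a function of `y4 = t`.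
Here `q1 = (-1/2,0)`, `q2 = (1/2,0)`, `q3 = (x3,y3)`, `q4 = (0,t)`,
`q5 = (-x3,y3)`, `R_{ij} = r_{ij}^{-A}`. -/
noncomputable def F (A t : ℝ) : ℝ :=
  let x3 := x3A t
  let y3 := y3A t
  let r13 := Real.sqrt ((x3 + 1/2)^2 + y3^2)
  let r14 := Real.sqrt ((1/2)^2 + t^2)
  let r35 := 2*x3
  let R13 := r13 ^ (-A)
  let R14 := r14 ^ (-A)
  let R35 := r35 ^ (-A)
  let Δ124 := t
  let Δ134 := x3*t + (t - y3)/2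
  let Δ145 := x3*t - (t - y3)/2
  let Δ345 := 2*x3*(t - y3)
  (1 - R14)*(R35 - 1)*Δ124*Δ345
    + (1 - R13)*Δ134*((R13 - R14)*Δ134 + (1 - R14)*Δ145)

private lemma aux_sq_lt {x y : ℝ} (hx : 0 ≤ x) (hy : 0 < y) (h : x^2 < y^2) :
    x < y := by nlinarith

private lemma sqrt3_gt : (1.7:ℝ) < Real.sqrt 3 := by
  nlinarith [Real.sq_sqrt (show (0:ℝ) ≤ 3 by norm_num), Real.sqrt_nonneg 3]

private lemma sqrt3_lt : Real.sqrt 3 < 2 := by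
  nlinarith [Real.sq_sqrt (show (0:ℝ) ≤ 3 by norm_num), Real.sqrt_nonneg 3]

private lemma sqrt5_gt : (2:ℝ) < Real.sqrt 5 := by
  nlinarith [Real.sq_sqrt (show (0:ℝ) ≤ 5 by norm_num), Real.sqrt_nonneg 5]

private lemma sqrt5_lt : Real.sqrt 5 < 2.24 := by
  nlinarith [Real.sq_sqrt (show (0:ℝ) ≤ 5 by norm_num), Real.sqrt_nonneg 5]

set_option maxHeartbeats 1600000 in
/-- For every `A ≥ 2` there is a `y4` strictly between `(2-√3)/2` and
`√(5-2√5)/2` along branch A at which the minor `F` vanishes. -/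
theorem stmt_12 (A : ℝ) (hA : 2 ≤ A) :
    ∃ t : ℝ, (2 - Real.sqrt 3)/2 < t ∧ t < Real.sqrt (5 - 2*Real.sqrt 5) / 2 ∧
      F A t = 0 := by
  have hAneg : -A < 0 := by linarith
  set s := Real.sqrt 3 with hsdef
  have hs : s^2 = 3 := Real.sq_sqrt (by norm_num)
  have hs0 : 0 ≤ s := Real.sqrt_nonneg 3
  have hs1 : (1.7:ℝ) < s := sqrt3_gt
  have hs2 : s < 2 := sqrt3_lt
  set u := Real.sqrt 5 with hudef
  have hu : u^2 = 5 := Real.sq_sqrt (by norm_num)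
  have hu0 : 0 ≤ u := Real.sqrt_nonneg 5
  have hu1 : (2:ℝ) < u := sqrt5_gt
  have hu2 : u < 2.24 := sqrt5_lt
  set v := Real.sqrt (5 - 2*u) with hvdef
  have hv52 : 0 < 5 - 2*u := by linarith
  have hv : v^2 = 5 - 2*u := Real.sq_sqrt hv52.le
  have hv0 : 0 < v := Real.sqrt_pos.mpr hv52
  -- endpoints
  have hab : (2 - s)/2 < v/2 := by
    have h1 : (2-s)^2 < v^2 := by
      have e1 : (2-s)^2 = 7 - 4*s := by linear_combination hs
      rw [e1, hv]; linarith
    have h2 : 2 - s < v := aux_sq_lt (by linarith) hv0 h1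
    linarith
  -- ===== value at left endpoint a = (2-s)/2 =====
  have hga : g ((2-s)/2) = 16 := by
    unfold g; linear_combination (-13 + 8*s - s^2) * hs
  have hsg : Real.sqrt (g ((2-s)/2)) = 4 := by
    rw [hga, show (16:ℝ) = 4^2 by norm_num, Real.sqrt_sq (by norm_num : (0:ℝ) ≤ 4)]
  have hden : (4*(4*((2-s)/2)^2 + 1)) ≠ 0 := by positivity
  have hx3a : x3A ((2-s)/2) = 1/2 := by
    unfold x3A; rw [hsg, div_eq_iff hden]; linear_combination -hs
  have hy3a : y3A ((2-s)/2) = 1 := by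
    unfold y3A; rw [hsg, div_eq_iff hden]; linear_combination (2-s)*hs
  -- R13 at a : base sqrt 2
  have hsqrt2 : 1 < Real.sqrt 2 := by
    rw [show (1:ℝ) = Real.sqrt 1 by simp]
    exact Real.sqrt_lt_sqrt (by norm_num) (by norm_num)
  set P := Real.sqrt 2 ^ (-A) with hPdef
  have hP1 : P < 1 := Real.rpow_lt_one_of_one_lt_of_neg hsqrt2 hAneg
  have hP0 : 0 < P := Real.rpow_pos_of_pos (by linarith) _
  -- R14 at a : base sqrt (2 - s)
  have h2s0 : 0 < 2 - s := by linarith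
  have hrsq : (Real.sqrt (2-s))^2 = 2-s := Real.sq_sqrt h2s0.le
  have hr0 : 0 < Real.sqrt (2-s) := Real.sqrt_pos.mpr h2s0
  have hr1 : Real.sqrt (2-s) < 1 := by
    have : (Real.sqrt (2-s))^2 < 1^2 := by rw [hrsq]; nlinarith [hs1]
    exact aux_sq_lt (Real.sqrt_nonneg _) one_pos this
  set Q := Real.sqrt (2-s) ^ (-A) with hQdef
  have hQ : 1/(2-s) ≤ Q := by
    have h2 : Real.sqrt (2-s) ^ (-2:ℝ) = (2-s)⁻¹ := by
      have hnat := Real.rpow_natCast (Real.sqrt (2-s)) 2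
      push_cast at hnat
      rw [Real.rpow_neg hr0.le, hnat, hrsq]
    have h3 := Real.rpow_le_rpow_of_exponent_ge hr0 hr1.le
      (show -A ≤ -2 by linarith)
    rw [h2] at h3
    rw [one_div]; exact h3
  have hQ1 : 1 ≤ Q * (2-s) := by
    rw [div_le_iff₀ h2s0] at hQ; linarith
  -- the inner factor S
  have hS : (P - Q)*((1-s)/2) + (1 - Q)*(1/2) < 0 := by
    have t1 : P*((1-s)/2) < 0 := mul_neg_of_pos_of_neg hP0 (by linarith)
    have heq : (P - Q)*((1-s)/2) + (1 - Q)*(1/2)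
        = P*((1-s)/2) + (1 - Q*(2-s))/2 := by ring
    rw [heq]; linarith
  have hFa : 0 < F A ((2-s)/2) := by
    have hbody : F A ((2-s)/2)
        = (1-P)*((1-s)/2)*((P-Q)*((1-s)/2) + (1-Q)*(1/2)) := by
      simp only [F]
      rw [show (x3A ((2-s)/2) + 1/2)^2 + (y3A ((2-s)/2))^2 = 2 by
        rw [hx3a, hy3a]; norm_num]
      rw [show ((1:ℝ)/2)^2 + ((2-s)/2)^2 = 2 - s by linear_combination (1/4)*hs]
      rw [hx3a, hy3a]
      rw [show (2*((1:ℝ)/2)) = 1 by norm_num, Real.one_rpow]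
      ring
    rw [hbody]
    have h1 : 0 < 1 - P := by linarith
    have h2 : (1-s)/2 < 0 := by linarith
    exact mul_pos_of_neg_of_neg (mul_neg_of_pos_of_neg h1 h2) hS
  -- ===== value at right endpoint b = v/2 =====
  have hgb : g (v/2) = 40 - 8*u := by
    unfold g; linear_combination (9 - v^2 + 2*u)*hv + (-4)*hu
  have hwsq : (v*(2+2*u))^2 = 40 - 8*u := by
    linear_combination (4 + 8*u + 4*u^2)*hv + (4 - 8*u)*hu
  have hw : Real.sqrt (g (v/2)) = v*(2+2*u) := by
    rw [hgb, ← hwsq, Real.sqrt_sq (by positivity)]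
  have hdenb : (4*(4*(v/2)^2 + 1)) ≠ 0 := by positivity
  have hx3b : x3A (v/2) = (1+u)/4 := by
    unfold x3A; rw [hw, div_eq_iff hdenb]; linear_combination (2+u)*hv + (-2)*hu
  have hy3b : y3A (v/2) = v*(3+u)/4 := by
    unfold y3A; rw [hw, div_eq_iff hdenb]
    linear_combination (-2*v - u*v)*hv + (2*v)*hu
  -- R14 at b : base (u-1)/2
  have hb14 : (0:ℝ) < (u-1)/2 := by linarith
  set Q2 := ((u-1)/2) ^ (-A) with hQ2def
  have hQ2 : 1 < Q2 :=
    (Real.one_lt_rpow_iff_of_pos hb14).mpr (Or.inr ⟨by linarith, hAneg⟩)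
  -- R35 = R13 at b : base (1+u)/2
  set P2 := ((1+u)/2) ^ (-A) with hP2def
  have hP2 : P2 < 1 :=
    Real.rpow_lt_one_of_one_lt_of_neg (by linarith) hAneg
  have hFb : F A (v/2) < 0 := by
    have hbody : F A (v/2)
        = -((Q2 - 1)*(1 - P2)*(v^2*(1+u)^2)/16) := by
      simp only [F]
      rw [show (x3A (v/2) + 1/2)^2 + (y3A (v/2))^2 = ((1+u)/2)^2 by
        rw [hx3b, hy3b]
        linear_combination (9/16 + 3/8*u + 1/16*u^2)*hv + (-5/8 - u/8)*hu]
      rw [show ((1:ℝ)/2)^2 + (v/2)^2 = ((u-1)/2)^2 by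
        linear_combination (1/4)*hv + (-1/4)*hu]
      rw [Real.sqrt_sq (by linarith : (0:ℝ) ≤ (1+u)/2),
        Real.sqrt_sq hb14.le, hx3b, hy3b]
      rw [show (2*((1+u)/4) : ℝ) = (1+u)/2 by ring]
      ring
    rw [hbody]
    have h1 : 0 < (Q2 - 1)*(1 - P2)*(v^2*(1+u)^2)/16 := by
      have := mul_pos (mul_pos (by linarith : (0:ℝ) < Q2 - 1)
        (by linarith : (0:ℝ) < 1 - P2)) (by positivity : (0:ℝ) < v^2*(1+u)^2)
      linarith
    linarith
  -- ===== continuity on [a, b] =====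
  have hcx : Continuous x3A := by
    unfold x3A g
    exact Continuous.div (by fun_prop) (by fun_prop) (fun x => by positivity)
  have hcy : Continuous y3A := by
    unfold y3A g
    exact Continuous.div (by fun_prop) (by fun_prop) (fun x => by positivity)
  have hcontF : ContinuousOn (F A) (Set.Icc ((2-s)/2) (v/2)) := by
    intro t ht
    have ht0 : 0 < t := lt_of_lt_of_le (by linarith) ht.1
    have hx3t : 0 < x3A t := by
      unfold x3A
      apply div_pos _ (by positivity)
      have h1 : 0 ≤ 2*t*Real.sqrt (g t) :=
        mul_nonneg (by linarith) (Real.sqrt_nonneg _)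
      have h2 : 0 < 4*t^2 + 1 := by positivity
      linarith
    apply ContinuousAt.continuousWithinAt
    have h13 : ContinuousAt
        (fun t => Real.sqrt ((x3A t + 1/2)^2 + (y3A t)^2) ^ (-A)) t := by
      apply ContinuousAt.rpow_const
      · exact (Real.continuous_sqrt.comp (by fun_prop)).continuousAt
      · refine Or.inl (ne_of_gt (Real.sqrt_pos.mpr ?_))
        have h1 : 0 < (x3A t + 1/2)^2 := pow_pos (by linarith) 2
        have h2 : 0 ≤ (y3A t)^2 := sq_nonneg _
        linarith
    have h14 : ContinuousAt
        (fun t : ℝ => Real.sqrt ((1/2)^2 + t^2) ^ (-A)) t := by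
      apply ContinuousAt.rpow_const
      · exact (Real.continuous_sqrt.comp (by fun_prop)).continuousAt
      · exact Or.inl (ne_of_gt (Real.sqrt_pos.mpr (by positivity)))
    have h35 : ContinuousAt (fun t => (2 * x3A t) ^ (-A)) t := by
      apply ContinuousAt.rpow_const
      · exact (continuous_const.mul hcx).continuousAt
      · exact Or.inl (ne_of_gt (by linarith : (0:ℝ) < 2 * x3A t))
    show ContinuousAt (fun t => F A t) t
    simp only [F]
    fun_prop
  obtain ⟨t, htmem, htF⟩ :=
    intermediate_value_Ioo' hab.le hcontF (Set.mem_Ioo.mpr ⟨hFb, hFa⟩)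
  exact ⟨t, htmem.1, htmem.2, htF⟩
end

section
/- Suppose q1,...,q5 are planar points forming a central configuration with positive masses and exponent A > 0 in the symmetric equilateral setting (q1 = (-1/2,0), q2 = (1/2,0), q3 = (x3,y3), q4 = (0,y4), q5 = (-x3,y3), unit sides, m1 = m2, m3 = m5). Then y4 ≠ 0. -/
open Finset

lemma dsq_aux (p q : ℝ × ℝ) (h : d p q = 1) : (p.1 - q.1)^2 + (p.2 - q.2)^2 = 1 :=
  Real.sqrt_eq_one.mp h

set_option maxHeartbeats 1000000 in
/-- In the symmetric equilateral setting, a central configuration with positive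
masses must have `y4 ≠ 0`. -/
theorem stmt_14 (A : ℝ) (hA : 0 < A) (x3 y3 y4 : ℝ)
    (q : Fin 5 → ℝ × ℝ)
    (hq0 : q 0 = (-1/2, 0)) (hq1 : q 1 = (1/2, 0)) (hq2 : q 2 = (x3, y3))
    (hq3 : q 3 = (0, y4)) (hq4 : q 4 = (-x3, y3))
    (h12 : d (q 0) (q 1) = 1) (h23 : d (q 1) (q 2) = 1) (h34 : d (q 2) (q 3) = 1)
    (h45 : d (q 3) (q 4) = 1) (h51 : d (q 4) (q 0) = 1)
    (m : Fin 5 → ℝ) (hm : ∀ i, 0 < m i) (hm12 : m 0 = m 1) (hm35 : m 2 = m 4)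
    (lam : ℝ) (hcc : IsCC A m q lam) :
    y4 ≠ 0 := by
  intro hy4
  subst hy4
  have e23 := dsq_aux _ _ h23
  have e34 := dsq_aux _ _ h34
  rw [hq1, hq2] at e23
  rw [hq2, hq3] at e34
  simp only [] at e23 e34
  have hx3 : x3 = 1/4 := by nlinarith
  have hy3 : y3^2 = 15/16 := by nlinarith
  have hy3ne : y3 ≠ 0 := by intro h; rw [h] at hy3; norm_num at hy3
  -- the two CC equations, second components
  have e0 := congrArg Prod.snd (hcc 0)
  have e3 := congrArg Prod.snd (hcc 3)
  rw [Finset.sum_erase _ (by rw [sub_self, smul_zero])] at e0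
  rw [Finset.sum_erase _ (by rw [sub_self, smul_zero])] at e3
  rw [Prod.snd_sum, Fin.sum_univ_five] at e0 e3
  -- distances
  have d32 : d (q 3) (q 2) = 1 := by
    unfold d at h34 ⊢; rw [← h34]; ring_nf
  have d04 : d (q 0) (q 4) = 1 := by
    unfold d at h51 ⊢; rw [← h51]; ring_nf
  have d02 : d (q 0) (q 2) = Real.sqrt (3/2) := by
    rw [hq0, hq2]; unfold d; rw [hx3]
    congr 1; simp; nlinarith
  rw [d02, d04] at e0
  rw [d32, h45] at e3
  simp only [hq0, hq1, hq2, hq3, hq4, Prod.smul_snd, Prod.snd_sub,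
    smul_eq_mul, Real.one_rpow, sub_self, smul_zero] at e0 e3
  -- In e0, the self term j=0 : d(q0,q0)=0, term zero anyway since (q0-q0).2 = 0
  norm_num at e0 e3
  -- Now derive contradiction
  have hgt : 1 < Real.sqrt (3/2) ^ A := by
    rw [Real.one_lt_rpow_iff (Real.sqrt_nonneg _)]
    left
    constructor
    · nlinarith [Real.sq_sqrt (by norm_num : (3:ℝ)/2 ≥ 0), Real.sqrt_nonneg (3/2 : ℝ)]
    · exact hA
  have hm2 := hm 2
  have key : m 2 / Real.sqrt (3/2) ^ A < m 2 := by
    exact (div_lt_iff₀ (by linarith)).mpr ((lt_mul_iff_one_lt_right hm2).mpr hgt)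
  have hs : Real.sqrt 3 / Real.sqrt 2 = Real.sqrt (3/2) :=
    (Real.sqrt_div (by norm_num) 2).symm
  rw [hs] at e0
  have heq : m 2 / Real.sqrt (3/2) ^ A * y3 = m 2 * y3 := by linarith
  have : m 2 / Real.sqrt (3/2) ^ A = m 2 := mul_right_cancel₀ hy3ne heq
  linarith
end
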